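/- In the ring R the identity x⁷ = 6s⁷t⁹·y + s⁶t⁹·y + 14s⁴t⁷·y + s²t⁵·y + 6st⁵·y + 8s³t⁶·x holds. -/

import Mathlib

/-!
The ring `R = ℤ[s^{±1}, t^{±1}, x, y] / (x³ = 2t²sx + t³s²y, xy = t³s³y + t⁵s⁶y, t⁶s⁸ = 1)`
is modeled as a quotient of the polynomial ring `ℤ[s, s', t, t', x, y]` (variables indexed by
`Fin 6`: `0 ↦ s`, `1 ↦ s⁻¹`, `2 ↦ t`, `3 ↦ t⁻¹`, `4 ↦ x`, `5 ↦ y`) by the ideal generated by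
`s·s' − 1`, `t·t' − 1` (making `s` and `t` invertible) and the three defining relations.
-/

open MvPolynomial

noncomputable section

def boRel : Ideal (MvPolynomial (Fin 6) ℤ) :=
  Ideal.span
    { X 0 * X 1 - 1,
      X 2 * X 3 - 1,
      X 4 ^ 3 - 2 * X 2 ^ 2 * X 0 * X 4 - X 2 ^ 3 * X 0 ^ 2 * X 5,
      X 4 * X 5 - X 2 ^ 3 * X 0 ^ 3 * X 5 - X 2 ^ 5 * X 0 ^ 6 * X 5,
      X 2 ^ 6 * X 0 ^ 8 - 1 }

def R : Type := MvPolynomial (Fin 6) ℤ ⧸ boRel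

instance : CommRing R := inferInstanceAs (CommRing (MvPolynomial (Fin 6) ℤ ⧸ boRel))

/-- the element `s` of `R` -/
def s : R := Ideal.Quotient.mk boRel (X 0)
/-- the element `s⁻¹` of `R` -/
def si : R := Ideal.Quotient.mk boRel (X 1)
/-- the element `t` of `R` -/
def t : R := Ideal.Quotient.mk boRel (X 2)
/-- the element `t⁻¹` of `R` -/
def ti : R := Ideal.Quotient.mk boRel (X 3)
/-- the element `x` of `R` -/
def x : R := Ideal.Quotient.mk boRel (X 4)
/-- the element `y` of `R` -/
def y : R := Ideal.Quotient.mk boRel (X 5)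

/-!
If `x³ = a x + b y` and `x y = c y`, then `x^(n+3) = a x^(n+1) + b cⁿ y`, so
`x⁷ = a³ x + (a²b + abc² + bc⁴) y`. For `a = 2t²s`, `b = t³s²`, `c = t³s³ + t⁵s⁶` the
coefficient of `y` agrees with the claimed one modulo `t⁶s⁸ = 1`, and `a³ = 8s³t⁶`.
-/

section CubicRecurrence

variable {A : Type*} [CommRing A] {a b c x y : A}

theorem pow_add_three_eq (hx : x ^ 3 = a * x + b * y) (hxy : x * y = c * y) (n : ℕ) :
    x ^ (n + 3) = a * x ^ (n + 1) + b * c ^ n * y := by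
  have hxny : x ^ n * y = c ^ n * y :=
    (mul_comm _ _).trans (SemiconjBy.pow_right ((mul_comm y x).trans hxy) n)
  calc x ^ (n + 3) = x ^ n * x ^ 3 := pow_add x n 3
    _ = a * x ^ (n + 1) + b * (x ^ n * y) := by rw [hx]; ring
    _ = a * x ^ (n + 1) + b * c ^ n * y := by rw [hxny]; ring

theorem pow_seven_eq (hx : x ^ 3 = a * x + b * y) (hxy : x * y = c * y) :
    x ^ 7 = a ^ 3 * x + (a ^ 2 * b + a * b * c ^ 2 + b * c ^ 4) * y := by
  rw [pow_add_three_eq hx hxy 4, pow_add_three_eq hx hxy 2, hx]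
  ring

end CubicRecurrence

theorem x_pow_three : x ^ 3 = 2 * t ^ 2 * s * x + t ^ 3 * s ^ 2 * y := by
  have h : Ideal.Quotient.mk boRel
      (X 4 ^ 3 - 2 * X 2 ^ 2 * X 0 * X 4 - X 2 ^ 3 * X 0 ^ 2 * X 5) = 0 :=
    Ideal.Quotient.eq_zero_iff_mem.mpr (Ideal.subset_span (by simp))
  simp only [map_sub, map_mul, map_pow, map_ofNat] at h
  have h' : x ^ 3 - 2 * t ^ 2 * s * x - t ^ 3 * s ^ 2 * y = 0 := h
  linear_combination h'

theorem x_mul_y : x * y = (t ^ 3 * s ^ 3 + t ^ 5 * s ^ 6) * y := by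
  have h : Ideal.Quotient.mk boRel
      (X 4 * X 5 - X 2 ^ 3 * X 0 ^ 3 * X 5 - X 2 ^ 5 * X 0 ^ 6 * X 5) = 0 :=
    Ideal.Quotient.eq_zero_iff_mem.mpr (Ideal.subset_span (by simp))
  simp only [map_sub, map_mul, map_pow] at h
  have h' : x * y - t ^ 3 * s ^ 3 * y - t ^ 5 * s ^ 6 * y = 0 := h
  linear_combination h'

theorem t_pow_six_mul_s_pow_eight : t ^ 6 * s ^ 8 = 1 := by
  have h : Ideal.Quotient.mk boRel (X 2 ^ 6 * X 0 ^ 8 - 1) = 0 :=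
    Ideal.Quotient.eq_zero_iff_mem.mpr (Ideal.subset_span (by simp))
  simp only [map_sub, map_mul, map_pow, map_one] at h
  exact sub_eq_zero.mp h

/-- In the ring `R`, the identity `x⁷ = 6s⁷t⁹·y + s⁶t⁹·y + 14s⁴t⁷·y + s²t⁵·y + 6st⁵·y + 8s³t⁶·x` holds. -/
theorem x_pow_seven : x ^ 7 = 6 * s ^ 7 * t ^ 9 * y + s ^ 6 * t ^ 9 * y + 14 * s ^ 4 * t ^ 7 * y + s ^ 2 * t ^ 5 * y + 6 * s * t ^ 5 * y + 8 * s ^ 3 * t ^ 6 * x := by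
  rw [pow_seven_eq x_pow_three x_mul_y]
  linear_combination (6 * s * t ^ 5 + s ^ 2 * t ^ 5 + 10 * s ^ 4 * t ^ 7 + s ^ 6 * t ^ 9
      + 6 * s ^ 7 * t ^ 9 + 4 * s ^ 9 * t ^ 11 + s ^ 10 * t ^ 11 + 6 * s ^ 12 * t ^ 13
      + 4 * s ^ 15 * t ^ 15 + s ^ 18 * t ^ 17) * y * t_pow_six_mul_s_pow_eight

end
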